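/- arXiv:quant-ph/0409062 — 2 statements merged into one kernel-verified Lean document; each statement's English description precedes it below -/
import Mathlib

section
/- Let m be a natural number and let P and P' be two probability distributions on the set of bit strings {0,1}^m (i.e., nonnegative real-valued functions on (Fin m → ZMod 2) each summing to 1). If for every string X ∈ {0,1}^m the probability under P that the parity bit X·Z = Σ_i X_i Z_i (mod 2) of a sample Z equals 0 is the same as the corresponding probability under P', then P = P'. -/
open Finset

namespace ParityAux

noncomputable def e (a : ZMod 2) : ℝ := if a = 0 then 1 else -1

lemma zmod2_cases : ∀ c : ZMod 2, c = 0 ∨ c = 1 := by decide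

lemma zmod2_add_eq_zero : ∀ a b : ZMod 2, (a + b = 0 ↔ b = a) := by decide

lemma e_add (a b : ZMod 2) : e (a + b) = e a * e b := by
  rcases zmod2_cases a with ha | ha <;> rcases zmod2_cases b with hb | hb <;>
    subst ha <;> subst hb <;>
    rw [show ∀ x y : ZMod 2, x + y = if x = y then 0 else 1 from by decide] <;>
    norm_num [e]

lemma e_sum {ι : Type*} (s : Finset ι) (g : ι → ZMod 2) :
    e (∑ i ∈ s, g i) = ∏ i ∈ s, e (g i) := by
  classical
  induction s using Finset.induction with
  | empty => simp [e]
  | insert _ _ h ih => rw [Finset.sum_insert h, Finset.prod_insert h, e_add, ih]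

lemma sum_univ_zmod2 (f : ZMod 2 → ℝ) : ∑ x : ZMod 2, f x = f 0 + f 1 := by
  rw [show (Finset.univ : Finset (ZMod 2)) = {0, 1} from by decide]
  simp

lemma sum_e_single (c : ZMod 2) :
    ∑ x : ZMod 2, e (x * c) = if c = 0 then 2 else 0 := by
  rcases zmod2_cases c with h | h <;> subst h <;>
    rw [sum_univ_zmod2] <;> norm_num [e, show ((1:ZMod 2) * 1) = 1 from rfl]

lemma sum_char (m : ℕ) (v : Fin m → ZMod 2) :
    ∑ X : Fin m → ZMod 2, e (∑ i, X i * v i) = if v = 0 then (2:ℝ)^m else 0 := by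
  have h1 : ∀ X : Fin m → ZMod 2, e (∑ i, X i * v i) = ∏ i, e (X i * v i) :=
    fun X => e_sum _ _
  simp_rw [h1]
  rw [← Fintype.piFinset_univ,
    ← Finset.prod_univ_sum (fun _ : Fin m => (Finset.univ : Finset (ZMod 2)))
      (fun i x => e (x * v i))]
  simp_rw [sum_e_single]
  by_cases hv : v = 0
  · subst hv; simp
  · rw [if_neg hv]
    obtain ⟨i, hi⟩ : ∃ i, v i ≠ 0 := by
      by_contra hc; push_neg at hc; exact hv (funext hc)
    exact Finset.prod_eq_zero (Finset.mem_univ i) (by rw [if_neg hi])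

end ParityAux

/-- If two probability distributions on bit strings {0,1}^m have the same
parity-bit marginal `P_{X·Z}(0)` for every string `X`, then they are equal. -/
theorem parity_marginals_determine_distribution
    (m : ℕ) (P P' : (Fin m → ZMod 2) → ℝ)
    (hP0 : ∀ z, 0 ≤ P z) (hP'0 : ∀ z, 0 ≤ P' z)
    (hP1 : ∑ z, P z = 1) (hP'1 : ∑ z, P' z = 1)
    (h : ∀ X : Fin m → ZMod 2,
      ∑ z ∈ Finset.univ.filter (fun z : Fin m → ZMod 2 => (∑ i, X i * z i) = 0), P z =
      ∑ z ∈ Finset.univ.filter (fun z : Fin m → ZMod 2 => (∑ i, X i * z i) = 0), P' z) :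
    P = P' := by
  classical
  open ParityAux in
  set f : (Fin m → ZMod 2) → ℝ := fun z => P z - P' z with hf
  have hsum0 : ∑ z, f z = 0 := by
    simp [hf, Finset.sum_sub_distrib, hP1, hP'1]
  have hX : ∀ X : Fin m → ZMod 2, ∑ z, ParityAux.e (∑ i, X i * z i) * f z = 0 := by
    intro X
    have hA : ∑ z ∈ Finset.univ.filter (fun z : Fin m → ZMod 2 => (∑ i, X i * z i) = 0), f z = 0 := by
      simp only [hf, Finset.sum_sub_distrib]
      rw [h X]; ring
    have hsplit : ∑ z, ParityAux.e (∑ i, X i * z i) * f z =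
        (∑ z ∈ Finset.univ.filter (fun z : Fin m → ZMod 2 => (∑ i, X i * z i) = 0), f z)
        - (∑ z ∈ Finset.univ.filter (fun z : Fin m → ZMod 2 => ¬ (∑ i, X i * z i) = 0), f z) := by
      rw [← Finset.sum_filter_add_sum_filter_not Finset.univ
        (fun z : Fin m → ZMod 2 => (∑ i, X i * z i) = 0)
        (fun z => ParityAux.e (∑ i, X i * z i) * f z)]
      congr 1
      · apply Finset.sum_congr rfl
        intro z hz
        rw [Finset.mem_filter] at hz
        simp [ParityAux.e, hz.2]
      · rw [← Finset.sum_neg_distrib]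
        apply Finset.sum_congr rfl
        intro z hz
        rw [Finset.mem_filter] at hz
        simp [ParityAux.e, hz.2]
    have hB : ∑ z ∈ Finset.univ.filter (fun z : Fin m → ZMod 2 => ¬ (∑ i, X i * z i) = 0), f z = 0 := by
      have := Finset.sum_filter_add_sum_filter_not Finset.univ
        (fun z : Fin m → ZMod 2 => (∑ i, X i * z i) = 0) f
      rw [hA] at this
      linarith [hsum0, this]
    rw [hsplit, hA, hB]; ring
  have key : ∀ z0 : Fin m → ZMod 2, f z0 = 0 := by
    intro z0
    have hzero : ∑ X : Fin m → ZMod 2,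
        ParityAux.e (∑ i, X i * z0 i) * (∑ z, ParityAux.e (∑ i, X i * z i) * f z) = 0 := by
      simp [hX]
    have hcalc : ∑ X : Fin m → ZMod 2,
        ParityAux.e (∑ i, X i * z0 i) * (∑ z, ParityAux.e (∑ i, X i * z i) * f z)
        = (2:ℝ)^m * f z0 := by
      calc ∑ X : Fin m → ZMod 2,
          ParityAux.e (∑ i, X i * z0 i) * (∑ z, ParityAux.e (∑ i, X i * z i) * f z)
          = ∑ X : Fin m → ZMod 2, ∑ z, ParityAux.e (∑ i, X i * (z0 i + z i)) * f z := by
            apply Finset.sum_congr rfl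
            intro X _
            rw [Finset.mul_sum]
            apply Finset.sum_congr rfl
            intro z _
            rw [← mul_assoc, ← ParityAux.e_add, ← Finset.sum_add_distrib]
            congr 2
            apply Finset.sum_congr rfl
            intro i _
            ring
        _ = ∑ z, (∑ X : Fin m → ZMod 2, ParityAux.e (∑ i, X i * (z0 i + z i))) * f z := by
            rw [Finset.sum_comm]
            apply Finset.sum_congr rfl
            intro z _
            rw [Finset.sum_mul]
        _ = ∑ z, (if z0 + z = 0 then (2:ℝ)^m else 0) * f z := by
            apply Finset.sum_congr rfl
            intro z _
            have hs := ParityAux.sum_char m (z0 + z)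
            simp only [Pi.add_apply] at hs
            rw [hs]
        _ = ∑ z, (if z = z0 then (2:ℝ)^m else 0) * f z := by
            apply Finset.sum_congr rfl
            intro z _
            congr 1
            have : z0 + z = 0 ↔ z = z0 := by
              rw [funext_iff, funext_iff]
              exact forall_congr' fun i => ParityAux.zmod2_add_eq_zero (z0 i) (z i)
            simp [this]
        _ = (2:ℝ)^m * f z0 := by
            simp [ite_mul]
    rw [hcalc] at hzero
    have h2m : (2:ℝ)^m ≠ 0 := by positivity
    exact (mul_eq_zero.mp hzero).resolve_left h2m
  funext z
  have := key z
  simp only [hf] at this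
  linarith
end

section
/- Let m be a natural number, ε ≥ 0 a real number, and let P and P' be two probability distributions on {0,1}^m (nonnegative real-valued functions on (Fin m → ZMod 2) each summing to 1). If for every string X ∈ {0,1}^m one has |P_{X·Z}(0) − P'_{X·Z}(0)| ≤ ε, where P_{X·Z}(0) is the P-probability that the parity bit Σ_i X_i Z_i equals 0 (mod 2), then the L2 distance between the distributions satisfies (Σ_{z ∈ {0,1}^m} (P(z) − P'(z))²)^{1/2} ≤ 2ε. -/
/-!
Expand `d = P - P'` in the Walsh basis `z ↦ (-1)^(X ⬝ z)`. The Walsh coefficient of `d` at `X`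
equals `2 (P_{X·Z}(0) - P'_{X·Z}(0)) - ∑ d`, and `∑ d = 0`, so every coefficient is at most `2ε`
in absolute value. Parseval's identity (orthogonality of the characters of `(ℤ/2)^m`) says that
the mean square of the coefficients is `‖d‖₂²`, hence `‖d‖₂ ≤ 2ε`.
-/

open Finset

noncomputable section

namespace Walsh

variable {ι : Type*} [Fintype ι]

def paritySign : AddChar (ZMod 2) ℝ where
  toFun a := if a = 0 then 1 else -1
  map_zero_eq_one' := if_pos rfl
  map_add_eq_mul' a b := by
    have h : a + b = 0 ↔ (a = 0 ↔ b = 0) := by revert a b; decide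
    split_ifs <;> simp_all

lemma paritySign_eq_two_mul_indicator_sub_one (a : ZMod 2) :
    paritySign a = 2 * (if a = 0 then 1 else 0) - 1 := by
  simp only [paritySign, AddChar.coe_mk]
  split_ifs <;> norm_num

def walshChar (w : ι → ZMod 2) : AddChar (ι → ZMod 2) ℝ :=
  paritySign.compAddMonoidHom (AddMonoidHom.mk' (· ⬝ᵥ w) fun X Y => add_dotProduct X Y w)

@[simp]
lemma walshChar_apply (w X : ι → ZMod 2) : walshChar w X = paritySign (X ⬝ᵥ w) := rfl

lemma walshChar_mul_walshChar (w w' X : ι → ZMod 2) :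
    walshChar w X * walshChar w' X = walshChar (w - w') X := by
  simp only [walshChar_apply, ← AddChar.map_add_eq_mul, dotProduct_sub, CharTwo.sub_eq_add]

variable [DecidableEq ι]

lemma walshChar_eq_zero_iff {w : ι → ZMod 2} : walshChar w = 0 ↔ w = 0 := by
  refine ⟨fun hw => funext fun i => ?_, fun hw => by ext X; simp [hw, paritySign]⟩
  have hi := congrArg (· (Pi.single i 1)) hw
  norm_num [paritySign] at hi
  exact hi

lemma sum_walshChar_mul_walshChar (w w' : ι → ZMod 2) :
    ∑ X, walshChar w X * walshChar w' X =
      if w = w' then (Fintype.card (ι → ZMod 2) : ℝ) else 0 := by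
  simp only [walshChar_mul_walshChar, AddChar.sum_eq_ite, walshChar_eq_zero_iff, sub_eq_zero]

def walshTransform (d : (ι → ZMod 2) → ℝ) (X : ι → ZMod 2) : ℝ :=
  ∑ z, walshChar z X * d z

lemma sum_walshTransform_sq (d : (ι → ZMod 2) → ℝ) :
    ∑ X, walshTransform d X ^ 2 = Fintype.card (ι → ZMod 2) * ∑ z, d z ^ 2 := by
  calc ∑ X, walshTransform d X ^ 2
      = ∑ X, ∑ z, ∑ z', walshChar z X * walshChar z' X * (d z * d z') := by
        simp only [walshTransform, sq, sum_mul_sum, mul_mul_mul_comm]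
    _ = ∑ z, ∑ z', (∑ X, walshChar z X * walshChar z' X) * (d z * d z') := by
        simp only [sum_mul]
        rw [sum_comm]
        exact sum_congr rfl fun z _ => sum_comm
    _ = Fintype.card (ι → ZMod 2) * ∑ z, d z ^ 2 := by
        simp only [sum_walshChar_mul_walshChar, ite_mul, zero_mul, sum_ite_eq, mem_univ, if_true,
          mul_sum, sq]

lemma walshTransform_eq_two_mul_sum_filter_sub (d : (ι → ZMod 2) → ℝ) (X : ι → ZMod 2) :
    walshTransform d X = 2 * ∑ z with X ⬝ᵥ z = 0, d z - ∑ z, d z := by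
  simp only [walshTransform, walshChar_apply, paritySign_eq_two_mul_indicator_sub_one, sub_mul,
    sum_sub_distrib, one_mul, mul_assoc, ← mul_sum, ite_mul, zero_mul, sum_ite, sum_const_zero,
    add_zero]

lemma sqrt_sum_sq_le_of_abs_walshTransform_le (d : (ι → ZMod 2) → ℝ) {c : ℝ}
    (h : ∀ X, |walshTransform d X| ≤ c) : √(∑ z, d z ^ 2) ≤ c := by
  have hc : 0 ≤ c := (abs_nonneg _).trans (h 0)
  have hcard : (0 : ℝ) < Fintype.card (ι → ZMod 2) := by exact_mod_cast Fintype.card_pos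
  refine Real.sqrt_le_iff.2 ⟨hc, le_of_mul_le_mul_left ?_ hcard⟩
  calc (Fintype.card (ι → ZMod 2) : ℝ) * ∑ z, d z ^ 2
      = ∑ X, walshTransform d X ^ 2 := (sum_walshTransform_sq d).symm
    _ ≤ ∑ _X : ι → ZMod 2, c ^ 2 :=
        sum_le_sum fun X _ => sq_le_sq' (neg_le_of_abs_le (h X)) (le_of_abs_le (h X))
    _ = Fintype.card (ι → ZMod 2) * c ^ 2 := by simp

end Walsh

end

open Walsh in
theorem l2_dist_le_of_parity_marginals_close_general
    (m : ℕ) (ε : ℝ) (P P' : (Fin m → ZMod 2) → ℝ)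
    (hP1 : ∑ z, P z = 1) (hP'1 : ∑ z, P' z = 1)
    (h : ∀ X : Fin m → ZMod 2,
      |(∑ z ∈ Finset.univ.filter (fun z : Fin m → ZMod 2 => (∑ i, X i * z i) = 0), P z) -
       (∑ z ∈ Finset.univ.filter (fun z : Fin m → ZMod 2 => (∑ i, X i * z i) = 0), P' z)|
        ≤ ε) :
    Real.sqrt (∑ z, (P z - P' z) ^ 2) ≤ 2 * ε := by
  refine sqrt_sum_sq_le_of_abs_walshTransform_le (fun z => P z - P' z) fun X => ?_
  have hd : ∑ z, (P z - P' z) = 0 := by rw [sum_sub_distrib, hP1, hP'1, sub_self]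
  rw [walshTransform_eq_two_mul_sum_filter_sub, hd, sub_zero, sum_sub_distrib, abs_mul, abs_two]
  exact mul_le_mul_of_nonneg_left (h X) zero_le_two

/-- If all parity-bit marginals of two probability distributions on {0,1}^m
are ε-close, then the L2 distance between the distributions is at most 2ε. -/
theorem l2_dist_le_of_parity_marginals_close
    (m : ℕ) (ε : ℝ) (hε : 0 ≤ ε) (P P' : (Fin m → ZMod 2) → ℝ)
    (hP0 : ∀ z, 0 ≤ P z) (hP'0 : ∀ z, 0 ≤ P' z)
    (hP1 : ∑ z, P z = 1) (hP'1 : ∑ z, P' z = 1)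
    (h : ∀ X : Fin m → ZMod 2,
      |(∑ z ∈ Finset.univ.filter (fun z : Fin m → ZMod 2 => (∑ i, X i * z i) = 0), P z) -
       (∑ z ∈ Finset.univ.filter (fun z : Fin m → ZMod 2 => (∑ i, X i * z i) = 0), P' z)|
        ≤ ε) :
    Real.sqrt (∑ z, (P z - P' z) ^ 2) ≤ 2 * ε :=
  l2_dist_le_of_parity_marginals_close_general m ε P P' hP1 hP'1 h
end
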